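/- If k is a non-square positive integer, d is the nearest integer to √k, and R = 4d²/(k−d²) is an integer, then for every n ≥ 1 the iterate f^n(∞) of f(x) = (dx+k)/(x+d) equals p/q in lowest terms with |p² − kq²| ≤ |k − d²|, and hence is a convergent of the continued fraction of √k. -/

import Mathlib

/-!
Put `α = d + √k` and `e = k - d²`, so that `α² = 2dα + e` and `N(α) = -e`. In projective
coordinates `f` is multiplication by `α`, so `f^n(∞) = a/b` where `α^n = a + b√k`.

The relation `R e = 4d²` makes `α²/(-e)` a root of `X² + (R + 2)X + 1`, so `α^(2j+1)` is
divisible by `e^j` in `ℤ[√k]`; for even powers one more factor `gcd(2d, e)` divides, and its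
square is divisible by `e`. Hence `e^(n-1)` divides the square of the content `g` of `α^n`, and
the reduced fraction `p/q` satisfies `|p² - kq²| = |e|^n / g² ≤ |e|`.

As `d` is the integer nearest to `√k`, `|e| < √k`, and when `p² - kq² < 0` also `e ≤ d < √k`
and `p ≥ dq`. Either way `|√k - p/q| < 1/(2q²)`, so `p/q` is a convergent by Legendre's theorem.
-/

/-- The linear fractional transformation `f(x) = (dx + k)/(x + d)` acting on
the projective line `ℚℙ¹ = OnePoint ℚ`, with `f(∞) = d`. -/
noncomputable def lft (d k : ℚ) : OnePoint ℚ → OnePoint ℚ := fun x =>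
  match x with
  | none => (d : OnePoint ℚ)
  | some x => if x + d = 0 then OnePoint.infty else ((d * x + k) / (x + d) : ℚ)

/-- The point `a/b` of the projective line, with `a/0 = ∞`. -/
noncomputable def ratio (a b : ℚ) : OnePoint ℚ :=
  if b = 0 then OnePoint.infty else ((a / b : ℚ) : OnePoint ℚ)

lemma ratio_mul_left {c : ℚ} (hc : c ≠ 0) (a b : ℚ) : ratio (c * a) (c * b) = ratio a b := by
  simp only [ratio, mul_eq_zero, hc, false_or, mul_div_mul_left _ _ hc]

lemma lft_ratio (d k a b : ℚ) (h : a + d * b ≠ 0) :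
    lft d k (ratio a b) = ratio (d * a + k * b) (a + d * b) := by
  by_cases hb : b = 0
  · subst hb
    simp only [mul_zero, add_zero] at h ⊢
    simp [ratio, lft, h]
  · have hx : a / b + d ≠ 0 := by
      rw [div_add' _ _ _ hb]
      exact div_ne_zero h hb
    simp only [ratio, hb, if_false, h, lft, hx]
    congr 1
    field_simp

section Recurrence

variable {A : Type*} [CommRing A] {α d e R : A}

/-- Under `α² = 2dα + e` and `R e = 4d²`, this is `α^(2j-1)/(-e)^(j-1)`: the entry `0` is
`-e/α = 2d - α`, and the recurrence is multiplication by `α²/(-e)`, a root of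
`X² + (R + 2)X + 1`. -/
def oddPowQuot (α d R : A) : ℕ → A
  | 0 => 2 * d - α
  | 1 => α
  | j + 2 => -(R + 2) * oddPowQuot α d R (j + 1) - oddPowQuot α d R j

lemma pow_four_eq (hα : α ^ 2 = 2 * d * α + e) (hR : R * e = 4 * d ^ 2) :
    α ^ 4 = (R + 2) * e * α ^ 2 - e ^ 2 := by
  linear_combination (α ^ 2 + 2 * d * α - e) * hα - α ^ 2 * hR

lemma pow_two_mul_add_one_eq (hα : α ^ 2 = 2 * d * α + e) (hR : R * e = 4 * d ^ 2) (j : ℕ) :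
    α ^ (2 * j + 1) = (-e) ^ j * oddPowQuot α d R (j + 1) := by
  induction j using Nat.twoStepInduction with
  | zero => simp [oddPowQuot]
  | one =>
    simp only [oddPowQuot]
    linear_combination (α + 2 * d) * hα - α * hR
  | more j ih₀ ih₁ =>
    rw [oddPowQuot.eq_3]
    linear_combination (R + 2) * e * ih₁ - e ^ 2 * ih₀ + α ^ (2 * j + 1) * pow_four_eq hα hR

lemma dvd_mul_oddPowQuot (hα : α ^ 2 = 2 * d * α + e) {h : A} (h2d : h ∣ 2 * d) (he : h ∣ e)
    (j : ℕ) : h ∣ α * oddPowQuot α d R j := by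
  induction j using Nat.twoStepInduction with
  | zero =>
    have : α * (2 * d - α) = -e := by linear_combination -hα
    simpa [oddPowQuot, this] using he
  | one =>
    simpa [oddPowQuot, ← sq, hα] using dvd_add (h2d.mul_right α) he
  | more j ih₀ ih₁ =>
    have : α * oddPowQuot α d R (j + 2) =
        -(R + 2) * (α * oddPowQuot α d R (j + 1)) - α * oddPowQuot α d R j := by
      simp only [oddPowQuot]
      ring
    rw [this]
    exact dvd_sub (dvd_mul_of_dvd_right ih₁ _) ih₀

lemma exists_intCast_dvd_pow {d e R : ℤ} (hα : α ^ 2 = 2 * d * α + e) (hRe : R * e = 4 * d ^ 2)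
    (n : ℕ) : ∃ c : ℤ, (c : A) ∣ α ^ (n + 1) ∧ e ^ n ∣ c ^ 2 := by
  have hR : (R : A) * e = 4 * (d : A) ^ 2 := by exact_mod_cast congrArg (Int.cast : ℤ → A) hRe
  obtain ⟨j, rfl | rfl⟩ := Nat.even_or_odd' n
  · refine ⟨e ^ j, ?_, by rw [← pow_mul, mul_comm]⟩
    rw [pow_two_mul_add_one_eq hα hR j, neg_pow]
    push_cast
    exact dvd_mul_of_dvd_left (dvd_mul_left _ _) _
  · have he : e ∣ gcd (2 * d) e ^ 2 :=
      (dvd_gcd ⟨R, by linear_combination -hRe⟩ dvd_rfl).trans gcd_pow_left_dvd_pow_gcd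
    have hw : ((gcd (2 * d) e : ℤ) : A) ∣ α * oddPowQuot α (d : A) R (j + 1) :=
      dvd_mul_oddPowQuot hα (by exact_mod_cast Int.cast_dvd_cast _ _ (gcd_dvd_left _ _))
        (Int.cast_dvd_cast _ _ (gcd_dvd_right _ _)) _
    refine ⟨e ^ j * gcd (2 * d) e, ?_, ?_⟩
    · rw [pow_succ, pow_two_mul_add_one_eq hα hR j, neg_pow]
      push_cast
      convert mul_dvd_mul (dvd_mul_left ((e : A) ^ j) ((-1) ^ j)) hw using 1
      ring
    · rw [pow_succ, mul_pow, ← pow_mul, mul_comm j]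
      exact mul_dvd_mul_left _ he

end Recurrence

lemma abs_le_of_sq_mul_eq_pow {g m e : ℤ} {n : ℕ} (hg : g ≠ 0) (hdvd : e ^ n ∣ g ^ 2)
    (h : g ^ 2 * m = (-e) ^ (n + 1)) : |m| ≤ |e| := by
  have hg2 : 0 < g ^ 2 := by positivity
  have hle : |e| ^ n ≤ g ^ 2 := by
    rw [← abs_pow]
    exact Int.le_of_dvd hg2 ((abs_dvd _ _).mpr hdvd)
  refine le_of_mul_le_mul_left ?_ hg2
  calc g ^ 2 * |m| = |e| * |e| ^ n := by
        rw [← pow_succ', ← abs_neg e, ← abs_pow, ← h, abs_mul, abs_of_pos hg2]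
    _ ≤ |e| * g ^ 2 := mul_le_mul_of_nonneg_left hle (abs_nonneg e)
    _ = g ^ 2 * |e| := mul_comm _ _

open Zsqrtd

section Zsqrtd

variable {k : ℤ}

lemma pow_re_pos_im_nonneg (hk : 0 ≤ k) {z : ℤ√k} (hre : 0 < z.re) (him : 0 ≤ z.im) (n : ℕ) :
    0 < (z ^ n).re ∧ 0 ≤ (z ^ n).im := by
  induction n with
  | zero => simp
  | succ n ih =>
    obtain ⟨h₁, h₂⟩ := ih
    rw [pow_succ, re_mul, im_mul]
    constructor
    · nlinarith [mul_nonneg (mul_nonneg hk h₂) him]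
    · nlinarith

lemma lft_iterate_infty {d : ℤ} (hd : 0 < d) (hk : 0 ≤ k) (n : ℕ) :
    (lft d k)^[n] OnePoint.infty = ratio ((⟨d, 1⟩ ^ n : ℤ√k).re) ((⟨d, 1⟩ ^ n : ℤ√k).im) := by
  induction n with
  | zero => simp [ratio]
  | succ n ih =>
    obtain ⟨hre, him⟩ := pow_re_pos_im_nonneg (z := ⟨d, 1⟩) hk hd zero_le_one n
    rw [Function.iterate_succ_apply', ih, lft_ratio]
    · rw [pow_succ, re_mul, im_mul]
      push_cast
      congr 1 <;> ring
    · exact_mod_cast (by positivity : (0 : ℤ) < _ + d * _).ne'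

lemma norm_pow_mk (d : ℤ) (n : ℕ) : (⟨d, 1⟩ ^ n : ℤ√k).norm = (d ^ 2 - k) ^ n := by
  have : (⟨d, 1⟩ : ℤ√k).norm = d ^ 2 - k := by simp [norm_def, sq]
  exact (map_pow normMonoidHom _ n).trans (congrArg (· ^ n) this)

lemma sq_mk_eq (d : ℤ) : (⟨d, 1⟩ : ℤ√k) ^ 2 = 2 * d * ⟨d, 1⟩ + ((k - d ^ 2 : ℤ) : ℤ√k) := by
  ext <;> simp [sq] <;> ring

lemma exists_coprime_lft_iterate {d R : ℤ} (hd : 0 < d) (hk : 0 ≤ k)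
    (hRe : R * (k - d ^ 2) = 4 * d ^ 2) (n : ℕ) :
    ∃ p q : ℤ, 0 < p ∧ 0 < q ∧ IsCoprime p q ∧
      (lft d k)^[n + 1] OnePoint.infty = ratio p q ∧
      |p ^ 2 - k * q ^ 2| ≤ |k - d ^ 2| ∧ (p ^ 2 - k * q ^ 2 < 0 → d ^ 2 < k) := by
  obtain ⟨hre, him⟩ : 0 < (⟨d, 1⟩ ^ (n + 1) : ℤ√k).re ∧ 0 < (⟨d, 1⟩ ^ (n + 1) : ℤ√k).im := by
    obtain ⟨hre, him⟩ := pow_re_pos_im_nonneg (z := ⟨d, 1⟩) hk hd zero_le_one n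
    rw [pow_succ, re_mul, im_mul]
    constructor <;> nlinarith [mul_nonneg (mul_nonneg hk him) zero_le_one]
  obtain ⟨b, hzb, hcop⟩ := exists_coprime_of_gcd_pos (Int.gcd_pos_of_ne_zero_right _ him.ne')
  set g : ℤ := (Int.gcd (⟨d, 1⟩ ^ (n + 1) : ℤ√k).re (⟨d, 1⟩ ^ (n + 1) : ℤ√k).im : ℤ)
  have hg : 0 < g := by positivity
  have hre_eq : (⟨d, 1⟩ ^ (n + 1) : ℤ√k).re = g * b.re := by rw [hzb, re_smul]
  have him_eq : (⟨d, 1⟩ ^ (n + 1) : ℤ√k).im = g * b.im := by rw [hzb, im_smul]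
  have hnorm : g ^ 2 * (b.re ^ 2 - k * b.im ^ 2) = (-(k - d ^ 2)) ^ (n + 1) := by
    rw [neg_sub, ← norm_pow_mk, hzb, norm_mul, norm_intCast, norm_def]
    ring
  obtain ⟨c, hcz, hce⟩ := exists_intCast_dvd_pow (sq_mk_eq d) hRe n
  have hcg : c ∣ g := Int.dvd_coe_gcd ((intCast_dvd _ _).mp hcz).1 ((intCast_dvd _ _).mp hcz).2
  refine ⟨b.re, b.im, pos_of_mul_pos_right (hre_eq ▸ hre) hg.le,
    pos_of_mul_pos_right (him_eq ▸ him) hg.le, hcop, ?_, ?_, fun hneg => ?_⟩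
  · rw [lft_iterate_infty hd hk, hre_eq, him_eq]
    push_cast
    exact ratio_mul_left (by positivity) _ _
  · exact abs_le_of_sq_mul_eq_pow hg.ne' (hce.trans (pow_dvd_pow_of_dvd hcg 2)) hnorm
  · by_contra! hdk
    have := pow_nonneg (neg_nonneg.mpr (sub_nonpos.mpr hdk)) (n + 1)
    nlinarith

end Zsqrtd

lemma abs_sub_div_lt_of_two_mul_abs_sq_sub_lt {x p q : ℝ} (hq : 0 < q)
    (h : 2 * q * |p ^ 2 - x ^ 2 * q ^ 2| < p + q * x) : |x - p / q| < 1 / (2 * q ^ 2) := by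
  have hs : 0 < p + q * x := lt_of_le_of_lt (by positivity) h
  have hfac : |p ^ 2 - x ^ 2 * q ^ 2| = |x * q - p| * (p + q * x) := by
    rw [← abs_of_pos hs, ← abs_mul, ← abs_neg]
    ring_nf
  have hdiv : |x - p / q| = |x * q - p| / q := by
    rw [← abs_of_pos hq, ← abs_div, abs_of_pos hq, sub_div, mul_div_cancel_right₀ _ hq.ne']
  rw [hdiv, div_lt_div_iff₀ hq (by positivity)]
  rw [hfac] at h
  nlinarith

lemma exists_convs_eq_div {x : ℝ} {p q : ℤ} (hq : 0 < q) (hcop : IsCoprime p q)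
    (h : 2 * q * |p ^ 2 - x ^ 2 * q ^ 2| < p + q * x) :
    ∃ m, (GenContFract.of x).convs m = p / q := by
  have hden : ((p / q : ℚ).den : ℝ) = q := by
    exact_mod_cast Rat.den_div_eq_of_coprime hq (Int.isCoprime_iff_gcd_eq_one.mp hcop)
  obtain ⟨m, hm⟩ := Real.exists_convs_eq_rat (ξ := x) (q := p / q) (by
    rw [hden]
    push_cast
    exact abs_sub_div_lt_of_two_mul_abs_sq_sub_lt (by exact_mod_cast hq) (by exact_mod_cast h))
  exact ⟨m, by rw [hm]; push_cast; rfl⟩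

lemma mem_Icc_of_eq_round_sqrt {k : ℕ} (hk : 0 < k) {d : ℤ} (hd : d = round √k) :
    (k : ℤ) ∈ Set.Icc (d ^ 2 - d + 1) (d ^ 2 + d) := by
  obtain ⟨h₁, h₂⟩ := abs_le.mp (hd ▸ abs_sub_round √k)
  have hx2 : √k ^ 2 = k := Real.sq_sqrt k.cast_nonneg
  have hx1 : 1 ≤ √k := Real.one_le_sqrt.mpr (by exact_mod_cast hk)
  constructor
  · have : ((d ^ 2 - d : ℤ) : ℝ) < k := by push_cast; nlinarith
    exact_mod_cast this
  · have : (k : ℝ) < ((d ^ 2 + d + 1 : ℤ) : ℝ) := by push_cast; nlinarith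
    exact Int.lt_add_one_iff.mp (by exact_mod_cast this)

lemma abs_sub_sq_lt_sqrt_of_mem_Icc {k : ℕ} {d : ℤ}
    (hkd : (k : ℤ) ∈ Set.Icc (d ^ 2 - d + 1) (d ^ 2 + d)) : |(k : ℝ) - d ^ 2| < √k := by
  obtain ⟨hlb, hub⟩ := hkd
  apply Real.lt_sqrt_of_sq_lt
  rw [sq_abs]
  have : ((k : ℤ) - d ^ 2) ^ 2 < k := by nlinarith
  exact_mod_cast this

lemma two_mul_abs_sq_sub_lt {k : ℕ} {d p q : ℤ} (hp : 0 < p) (hq : 0 < q)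
    (hub : (k : ℤ) ≤ d ^ 2 + d) (he : |(k : ℝ) - d ^ 2| < √k)
    (hN : |p ^ 2 - k * q ^ 2| ≤ |k - d ^ 2|) (hsign : p ^ 2 - k * q ^ 2 < 0 → d ^ 2 < k) :
    2 * q * |p ^ 2 - √k ^ 2 * q ^ 2| < p + q * √k := by
  have hsq := Real.sq_sqrt (k.cast_nonneg : (0 : ℝ) ≤ k)
  rw [hsq]
  rcases le_or_gt 0 (p ^ 2 - k * q ^ 2) with hN₀ | hN₀
  · have hpx : q * √k ≤ p := by
      have : (k : ℝ) * q ^ 2 ≤ p ^ 2 := by exact_mod_cast (by linarith : k * q ^ 2 ≤ p ^ 2)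
      nlinarith [Real.sqrt_nonneg k, (by exact_mod_cast hp : (0 : ℝ) < p),
        (by exact_mod_cast hq : (0 : ℝ) < q)]
    have hN' : |(p : ℝ) ^ 2 - k * q ^ 2| ≤ |(k : ℝ) - d ^ 2| := by exact_mod_cast hN
    calc 2 * q * |(p : ℝ) ^ 2 - k * q ^ 2| ≤ 2 * q * |(k : ℝ) - d ^ 2| := by gcongr
      _ < 2 * q * √k := by gcongr
      _ ≤ p + q * √k := by linarith
  · have hdk := hsign hN₀
    rw [abs_of_pos (by linarith : (0 : ℤ) < k - d ^ 2)] at hN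
    have hdq : d * q ≤ p := by
      have hq1 : 1 ≤ q ^ 2 := one_le_pow₀ hq
      have hsq : (d * q) ^ 2 ≤ p ^ 2 := by
        nlinarith [neg_abs_le (p ^ 2 - k * q ^ 2),
          mul_nonneg (sub_nonneg.mpr hdk.le) (sub_nonneg.mpr hq1)]
      nlinarith
    have hdx : (d : ℝ) < √k := Real.lt_sqrt_of_sq_lt (by exact_mod_cast hdk)
    have hNd : |(p : ℝ) ^ 2 - k * q ^ 2| ≤ d := by exact_mod_cast (by linarith : _ ≤ d)
    have hdq' : (d : ℝ) * q ≤ p := by exact_mod_cast hdq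
    calc 2 * q * |(p : ℝ) ^ 2 - k * q ^ 2| ≤ 2 * q * d := by gcongr
      _ < q * d + q * √k := by
        nlinarith [mul_lt_mul_of_pos_left hdx (by exact_mod_cast hq : (0 : ℝ) < q)]
      _ ≤ p + q * √k := by linarith

/-- If `k` is a non-square positive integer, `d` is the nearest integer to `√k`, and
`R = 4d²/(k−d²)` is an integer, then for every `n ≥ 1` the iterate `f^n(∞)` of
`f(x) = (dx+k)/(x+d)` equals `p/q` in lowest terms with `|p² − kq²| ≤ |k − d²|`, and
hence is a convergent of the continued fraction of `√k`. -/
theorem stmt9 (k : ℕ) (hk : 0 < k) (hknsq : ¬ IsSquare k)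
    (d : ℤ) (hd : d = round (Real.sqrt k))
    (R : ℤ) (hR : (R : ℚ) = 4 * (d : ℚ) ^ 2 / ((k : ℚ) - (d : ℚ) ^ 2)) :
    ∀ n : ℕ, 1 ≤ n → ∃ p q : ℤ, 0 < q ∧ IsCoprime p q ∧
      (lft (d : ℚ) (k : ℚ))^[n] OnePoint.infty = ratio (p : ℚ) (q : ℚ) ∧
      |p ^ 2 - (k : ℤ) * q ^ 2| ≤ |(k : ℤ) - d ^ 2| ∧
      ∃ m : ℕ, (GenContFract.of (Real.sqrt k)).convs m = (p : ℝ) / (q : ℝ) := by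
  intro n hn
  obtain ⟨n, rfl⟩ := Nat.exists_eq_add_of_le' hn
  have hkd := mem_Icc_of_eq_round_sqrt hk hd
  have hd₀ : 0 < d := by nlinarith [hkd.1, hkd.2]
  have he : (k : ℤ) - d ^ 2 ≠ 0 := fun h ↦
    hknsq (Int.isSquare_natCast_iff.mp ⟨d, by linear_combination h⟩)
  have hRe : R * ((k : ℤ) - d ^ 2) = 4 * d ^ 2 := by
    rw [eq_div_iff (by exact_mod_cast he)] at hR
    exact_mod_cast hR
  obtain ⟨p, q, hp, hq, hcop, hiter, hN, hsign⟩ :=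
    exists_coprime_lft_iterate hd₀ (Nat.cast_nonneg k) hRe n
  refine ⟨p, q, hq, hcop, by simpa using hiter, hN, ?_⟩
  exact exists_convs_eq_div hq hcop
    (two_mul_abs_sq_sub_lt hp hq hkd.2 (abs_sub_sq_lt_sqrt_of_mem_Icc hkd) hN hsign)
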